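/- Approximate completeness: for any labelled Markov chain (X,L,τ,l), any states x,y ∈ X, and any real δ > 0, there exists a rational ε ∈ [0,1] such that the judgment x ⊢_ε y is derivable in the derivation system and 0 ≤ bd(x,y) − ε < δ. -/

import Mathlib

/-- A finitely supported, rational-valued probability distribution on `X`. -/
structure FinDist (X : Type*) where
  p : X → ℝ
  nonneg : ∀ x, 0 ≤ p x
  rat : ∀ x, ∃ q : ℚ, (q : ℝ) = p x
  supp : Finset X
  mem_supp : ∀ x, x ∈ supp ↔ p x ≠ 0
  sum_one : ∑ x ∈ supp, p x = 1

/-- A labelled Markov chain with states `X` and labels `L`. -/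
structure LMC (X : Type*) (L : Type*) where
  τ : X → FinDist X
  label : X → L

/-- Expectation `μ ⊨ h = ∑ x, μ(x)·h(x)`. -/
noncomputable def expv {X : Type*} (μ : FinDist X) (h : X → ℝ) : ℝ :=
  ∑ z ∈ μ.supp, μ.p z * h z

/-- A `[0,1]`-valued pseudometric on `X`. -/
structure PMet (X : Type*) where
  d : X → X → ℝ
  nonneg : ∀ x y, 0 ≤ d x y
  le_one : ∀ x y, d x y ≤ 1
  refl : ∀ x, d x x = 0
  symm : ∀ x y, d x y = d y x
  triangle : ∀ x y z, d x z ≤ d x y + d y z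

open Classical in
/-- The functional `Γ` (on underlying distance functions). -/
noncomputable def GammaFun {X L : Type*} (M : LMC X L) (d : X → X → ℝ) : X → X → ℝ :=
  fun x y =>
    if M.label x ≠ M.label y then 1
    else sSup { r : ℝ | ∃ h : X → ℝ, (∀ z, h z ∈ Set.Icc (0:ℝ) 1) ∧
      (∀ u v, |h u - h v| ≤ d u v) ∧ r = expv (M.τ x) h - expv (M.τ y) h }

/-- The derivation system for lower bounds on behavioural distances. -/
inductive Deriv {X L : Type*} [DecidableEq X] (M : LMC X L) : X → ℚ → X → Prop where
  | zero (x y : X) : Deriv M x 0 y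
  | lab (x y : X) : M.label x ≠ M.label y → Deriv M x 1 y
  | symm {x y : X} {ε : ℚ} : Deriv M y ε x → Deriv M x ε y
  | weak {x y : X} {ε ε' : ℚ} : Deriv M x ε' y → 0 ≤ ε → ε ≤ ε' → Deriv M x ε y
  | exp {x y : X} {ε : ℚ} (h : X → ℚ) :
      0 ≤ ε →
      (∀ z ∈ (M.τ x).supp ∪ (M.τ y).supp, 0 ≤ h z ∧ h z ≤ 1) →
      (∀ x' ∈ (M.τ x).supp ∪ (M.τ y).supp, ∀ y' ∈ (M.τ x).supp ∪ (M.τ y).supp,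
        h y' < h x' → Deriv M x' (h x' - h y') y') →
      (ε : ℝ) ≤ expv (M.τ x) (fun z => ((h z : ℚ) : ℝ))
              - expv (M.τ y) (fun z => ((h z : ℚ) : ℝ)) →
      Deriv M x ε y


/-!
Soundness: by induction on derivations, every derivable `ε` lies below any pre-fixed
pseudometric of `Γ`; in the `exp` rule, the rational test function, nonexpansive on the finite
set `S`, extends (McShane) to a nonexpansive test function on all of `X`.

Completeness up to `δ`: the supremum `supDeriv` of the derivable bounds is a pre-fixed point
of `Γ`. Indeed, if `h` is nonexpansive for `supDeriv`, then `ψ ∘ h`, with `ψ` a rational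
approximation of `a ↦ (1 - θ) a`, is strictly nonexpansive on the finitely many relevant
pairs, so each of its differences is derivable and the `exp` rule applies to it. By
Knaster–Tarski some fixed point of `Γ` lies below `supDeriv`; it is a pseudometric, since every
value of `Γ` is one, so the least fixed point `bd` lies below `supDeriv` as well.
-/

open Finset Function

section Expectation

variable {X : Type*}

theorem FinDist.supp_nonempty (μ : FinDist X) : μ.supp.Nonempty := by
  by_contra h
  have := μ.sum_one
  simp [Finset.not_nonempty_iff_eq_empty.mp h] at this

theorem expv_congr (μ : FinDist X) {f g : X → ℝ} (hfg : ∀ z ∈ μ.supp, f z = g z) :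
    expv μ f = expv μ g :=
  sum_congr rfl fun z hz => by rw [hfg z hz]

theorem expv_sub_le_one {μ ν : FinDist X} {f g : X → ℝ} (hf : ∀ z ∈ μ.supp, f z ≤ 1)
    (hg : ∀ z ∈ ν.supp, 0 ≤ g z) : expv μ f - expv ν g ≤ 1 := by
  have hμ : expv μ f ≤ ∑ z ∈ μ.supp, μ.p z * 1 :=
    sum_le_sum fun z hz => mul_le_mul_of_nonneg_left (hf z hz) (μ.nonneg z)
  have hν : 0 ≤ expv ν g := sum_nonneg fun z hz => mul_nonneg (ν.nonneg z) (hg z hz)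
  simp only [mul_one, μ.sum_one] at hμ
  linarith

theorem expv_one_sub (μ : FinDist X) (f : X → ℝ) :
    expv μ (fun z => 1 - f z) = 1 - expv μ f := by
  simp only [expv, mul_sub, mul_one, sum_sub_distrib, μ.sum_one]

theorem abs_expv_sub_expv_le (μ : FinDist X) {f g : X → ℝ} {c : ℝ}
    (hfg : ∀ z ∈ μ.supp, |f z - g z| ≤ c) : |expv μ f - expv μ g| ≤ c := by
  calc |expv μ f - expv μ g| = |∑ z ∈ μ.supp, μ.p z * (f z - g z)| := by
        simp only [expv, mul_sub, sum_sub_distrib]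
    _ ≤ ∑ z ∈ μ.supp, μ.p z * c := by
        refine (abs_sum_le_sum_abs _ _).trans (sum_le_sum fun z hz => ?_)
        rw [abs_mul, abs_of_nonneg (μ.nonneg z)]
        exact mul_le_mul_of_nonneg_left (hfg z hz) (μ.nonneg z)
    _ = c := by rw [← sum_mul, μ.sum_one, one_mul]

end Expectation

section Gamma

variable {X L : Type*} (M : LMC X L)

def gammaSet (d : X → X → ℝ) (x y : X) : Set ℝ :=
  { r : ℝ | ∃ h : X → ℝ, (∀ z, h z ∈ Set.Icc (0:ℝ) 1) ∧
      (∀ u v, |h u - h v| ≤ d u v) ∧ r = expv (M.τ x) h - expv (M.τ y) h }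

variable {M}

theorem gammaFun_of_ne {d : X → X → ℝ} {x y : X} (hl : M.label x ≠ M.label y) :
    GammaFun M d x y = 1 := by
  simp [GammaFun, hl]

theorem gammaFun_of_eq {d : X → X → ℝ} {x y : X} (hl : M.label x = M.label y) :
    GammaFun M d x y = sSup (gammaSet M d x y) := by
  simp [GammaFun, hl, gammaSet]

theorem gammaSet_bddAbove (d : X → X → ℝ) (x y : X) : BddAbove (gammaSet M d x y) :=
  ⟨1, by rintro _ ⟨h, hh, -, rfl⟩; exact expv_sub_le_one (fun z _ => (hh z).2) fun z _ => (hh z).1⟩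

theorem neg_mem_gammaSet {d : X → X → ℝ} {x y : X} {r : ℝ} (hr : r ∈ gammaSet M d x y) :
    -r ∈ gammaSet M d x y := by
  obtain ⟨h, hh, hne, rfl⟩ := hr
  refine ⟨fun z => 1 - h z, fun z => ⟨by linarith [(hh z).2], by linarith [(hh z).1]⟩,
    fun u v => ?_, by rw [expv_one_sub, expv_one_sub]; ring⟩
  rw [show 1 - h u - (1 - h v) = -(h u - h v) by ring, abs_neg]
  exact hne u v

theorem gammaSet_comm (d : X → X → ℝ) (x y : X) : gammaSet M d y x = gammaSet M d x y := by
  have key : ∀ x y, gammaSet M d x y ⊆ gammaSet M d y x := by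
    rintro x y _ ⟨h, hh, hne, rfl⟩
    simpa using neg_mem_gammaSet ⟨h, hh, hne, rfl⟩
  exact (key y x).antisymm (key x y)

theorem le_gammaFun {d : X → X → ℝ} {h : X → ℝ} (hh : ∀ z, h z ∈ Set.Icc (0:ℝ) 1)
    (hne : ∀ u v, |h u - h v| ≤ d u v) (x y : X) :
    expv (M.τ x) h - expv (M.τ y) h ≤ GammaFun M d x y := by
  by_cases hl : M.label x = M.label y
  · rw [gammaFun_of_eq hl]
    exact le_csSup (gammaSet_bddAbove d x y) ⟨h, hh, hne, rfl⟩
  · rw [gammaFun_of_ne hl]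
    exact expv_sub_le_one (fun z _ => (hh z).2) fun z _ => (hh z).1

theorem gammaFun_le {d : X → X → ℝ} {x y : X} (hl : M.label x = M.label y) {c : ℝ}
    (hc : 0 ≤ c)
    (H : ∀ h : X → ℝ, (∀ z, h z ∈ Set.Icc (0:ℝ) 1) → (∀ u v, |h u - h v| ≤ d u v) →
      expv (M.τ x) h - expv (M.τ y) h ≤ c) :
    GammaFun M d x y ≤ c := by
  rw [gammaFun_of_eq hl]
  exact Real.sSup_le (by rintro _ ⟨h, hh, hne, rfl⟩; exact H h hh hne) hc

theorem gammaFun_nonneg (d : X → X → ℝ) (x y : X) : 0 ≤ GammaFun M d x y := by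
  by_cases hl : M.label x = M.label y
  · rw [gammaFun_of_eq hl]
    rcases (gammaSet M d x y).eq_empty_or_nonempty with he | ⟨r, hr⟩
    · rw [he, Real.sSup_empty]
    · have h₁ := le_csSup (gammaSet_bddAbove d x y) hr
      have h₂ := le_csSup (gammaSet_bddAbove d x y) (neg_mem_gammaSet hr)
      linarith
  · rw [gammaFun_of_ne hl]
    exact zero_le_one

theorem gammaFun_le_one (d : X → X → ℝ) (x y : X) : GammaFun M d x y ≤ 1 := by
  by_cases hl : M.label x = M.label y
  · exact gammaFun_le hl zero_le_one fun h hh _ =>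
      expv_sub_le_one (fun z _ => (hh z).2) fun z _ => (hh z).1
  · rw [gammaFun_of_ne hl]

theorem gammaFun_self (d : X → X → ℝ) (x : X) : GammaFun M d x x = 0 :=
  le_antisymm (gammaFun_le rfl le_rfl fun h _ _ => by simp) (gammaFun_nonneg d x x)

theorem gammaFun_comm (d : X → X → ℝ) (x y : X) : GammaFun M d x y = GammaFun M d y x := by
  by_cases hl : M.label x = M.label y
  · rw [gammaFun_of_eq hl, gammaFun_of_eq hl.symm, gammaSet_comm]
  · rw [gammaFun_of_ne hl, gammaFun_of_ne (Ne.symm hl)]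

theorem gammaFun_triangle (d : X → X → ℝ) (x y z : X) :
    GammaFun M d x z ≤ GammaFun M d x y + GammaFun M d y z := by
  have hxy := gammaFun_nonneg (M := M) d x y
  have hyz := gammaFun_nonneg (M := M) d y z
  by_cases hxz : M.label x = M.label z
  · exact gammaFun_le hxz (add_nonneg hxy hyz) fun h hh hne => by
      linarith [le_gammaFun (M := M) hh hne x y, le_gammaFun (M := M) hh hne y z]
  · rw [gammaFun_of_ne hxz]
    by_cases hl : M.label x = M.label y
    · rw [gammaFun_of_ne (fun h => hxz (hl.trans h)) (x := y)]
      linarith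
    · rw [gammaFun_of_ne hl]
      linarith

theorem gammaFun_monotone : Monotone (GammaFun M) := by
  intro d d' hdd x y
  by_cases hl : M.label x = M.label y
  · exact gammaFun_le hl (gammaFun_nonneg d' x y) fun h hh hne =>
      le_gammaFun hh (fun u v => (hne u v).trans (hdd u v)) x y
  · rw [gammaFun_of_ne hl, gammaFun_of_ne hl]

variable (M) in
noncomputable def gammaPMet (d : X → X → ℝ) : PMet X where
  d := GammaFun M d
  nonneg := gammaFun_nonneg d
  le_one := gammaFun_le_one d
  refl := gammaFun_self d
  symm := gammaFun_comm d
  triangle := gammaFun_triangle d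

end Gamma

theorem Monotone.exists_isFixedPt_le {α : Type*} [ConditionallyCompleteLattice α] {f : α → α}
    (hf : Monotone f) {a : α} (ha : ∀ b, a ≤ f b) {q : α} (hq : f q ≤ q) :
    ∃ p, IsFixedPt f p ∧ p ≤ q := by
  set P := {b | f b ≤ b}
  have hbdd : BddBelow P := ⟨a, fun b hb => (ha b).trans hb⟩
  have hpre : f (sInf P) ≤ sInf P :=
    le_csInf ⟨q, hq⟩ fun b hb => (hf (csInf_le hbdd hb)).trans hb
  exact ⟨sInf P, le_antisymm hpre (csInf_le hbdd (hf hpre)), csInf_le hbdd hq⟩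

-- McShane's extension `z ↦ min 1 (inf_{s ∈ S} f s + p z s)`.
theorem PMet.exists_nonexpansive_extension {X : Type*} (p : PMet X) {S : Finset X}
    (hS : S.Nonempty) {f : X → ℝ} (hf01 : ∀ s ∈ S, f s ∈ Set.Icc (0:ℝ) 1)
    (hf : ∀ s ∈ S, ∀ t ∈ S, f s - f t ≤ p.d s t) :
    ∃ H : X → ℝ, (∀ z, H z ∈ Set.Icc (0:ℝ) 1) ∧ (∀ u v, |H u - H v| ≤ p.d u v) ∧
      ∀ s ∈ S, H s = f s := by
  set F : X → ℝ := fun z => S.inf' hS fun s => f s + p.d z s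
  have hF_le : ∀ u v, F u ≤ F v + p.d u v := by
    intro u v
    obtain ⟨s, hs, hFv⟩ := exists_mem_eq_inf' hS fun s => f s + p.d v s
    have := inf'_le (fun s => f s + p.d u s) hs
    linarith [p.triangle u v s]
  have hF_abs : ∀ u v, |F u - F v| ≤ p.d u v := fun u v =>
    abs_sub_le_iff.2 ⟨by linarith [hF_le u v], by linarith [hF_le v u, p.symm u v]⟩
  have hF_eq : ∀ s ∈ S, F s = f s := fun s hs =>
    le_antisymm (by simpa [p.refl] using inf'_le (fun t => f t + p.d s t) hs)
      (le_inf' hS _ fun t ht => by linarith [hf s hs t ht])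
  have hF_nonneg : ∀ z, 0 ≤ F z := fun z =>
    le_inf' hS _ fun t ht => add_nonneg (hf01 t ht).1 (p.nonneg z t)
  refine ⟨fun z => min 1 (F z), fun z => ⟨le_min zero_le_one (hF_nonneg z), min_le_left _ _⟩,
    fun u v => (abs_min_sub_min_le_max _ _ _ _).trans (by simpa using hF_abs u v),
    fun s hs => by simp [hF_eq s hs, (hf01 s hs).2]⟩

section Deriv

variable {X L : Type*} [DecidableEq X] {M : LMC X L}

theorem Deriv.nonneg {x y : X} {ε : ℚ} (hd : Deriv M x ε y) : 0 ≤ ε := by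
  induction hd with
  | zero => exact le_rfl
  | lab => exact zero_le_one
  | symm _ ih => exact ih
  | weak _ h0 _ _ => exact h0
  | exp _ h0 _ _ _ _ => exact h0

theorem Deriv.le_one {x y : X} {ε : ℚ} (hd : Deriv M x ε y) : ε ≤ 1 := by
  induction hd with
  | zero => exact zero_le_one
  | lab => exact le_rfl
  | symm _ ih => exact ih
  | weak _ _ hle ih => exact hle.trans ih
  | exp h _ hrange _ hexp _ =>
    have := expv_sub_le_one (f := fun z => (h z : ℝ)) (g := fun z => (h z : ℝ))
      (fun z hz => by exact_mod_cast (hrange z (mem_union_left _ hz)).2)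
      (fun z hz => by exact_mod_cast (hrange z (mem_union_right _ hz)).1)
    exact_mod_cast hexp.trans this

theorem Deriv.le_of_prefixed (p : PMet X) (hpre : ∀ x y, GammaFun M p.d x y ≤ p.d x y)
    {x y : X} {ε : ℚ} (hd : Deriv M x ε y) : (ε : ℝ) ≤ p.d x y := by
  induction hd with
  | zero x y => exact_mod_cast p.nonneg x y
  | lab x y hl => simpa [gammaFun_of_ne hl] using hpre x y
  | symm _ ih => rwa [p.symm]
  | weak _ _ hle ih => exact (Rat.cast_le.mpr hle).trans ih
  | @exp x y ε h _ hrange _ hexp ih =>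
    have hf : ∀ s ∈ (M.τ x).supp ∪ (M.τ y).supp, ∀ t ∈ (M.τ x).supp ∪ (M.τ y).supp,
        (h s : ℝ) - h t ≤ p.d s t := by
      intro s hs t ht
      rcases lt_or_ge (h t) (h s) with hlt | hle
      · exact_mod_cast ih s hs t ht hlt
      · have : (h s : ℝ) ≤ h t := by exact_mod_cast hle
        linarith [p.nonneg s t]
    obtain ⟨H, hH01, hHne, hHeq⟩ := p.exists_nonexpansive_extension
      ((M.τ x).supp_nonempty.mono subset_union_left)
      (fun s hs => ⟨by exact_mod_cast (hrange s hs).1, by exact_mod_cast (hrange s hs).2⟩) hf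
    calc (ε : ℝ) ≤ expv (M.τ x) (fun z => (h z : ℝ)) - expv (M.τ y) (fun z => (h z : ℝ)) := hexp
      _ = expv (M.τ x) H - expv (M.τ y) H := by
        rw [expv_congr _ fun z hz => hHeq z (mem_union_left _ hz),
          expv_congr _ fun z hz => hHeq z (mem_union_right _ hz)]
      _ ≤ GammaFun M p.d x y := le_gammaFun hH01 hHne x y
      _ ≤ p.d x y := hpre x y

end Deriv

-- `ψ a` is a rational in `((1 - θ) a, (1 - θ) a + θ²)`, with `θ` below every gap of `V`:
-- shrinking by `1 - θ` leaves room for the rounding error, so `ψ` is strictly contracting on `V`.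
theorem exists_rat_contracting_approx (V : Finset ℝ) (hV : ∀ a ∈ V, a ∈ Set.Icc (0:ℝ) 1)
    {η : ℝ} (hη : 0 < η) :
    ∃ ψ : ℝ → ℚ, ∀ a ∈ V, ((ψ a : ℝ) ∈ Set.Icc (0:ℝ) 1 ∧ |(ψ a : ℝ) - a| < η) ∧
      ∀ b ∈ V, a ≠ b → |(ψ a : ℝ) - ψ b| < |a - b| := by
  have hsep : ∀ a ∈ V, ∀ b ∈ V, ∀ᶠ θ in nhdsWithin (0:ℝ) (Set.Ioi 0), a ≠ b → θ ≤ |a - b| := by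
    intro a _ b _
    by_cases hab : a = b
    · exact Filter.Eventually.of_forall fun _ h => absurd hab h
    · filter_upwards [nhdsWithin_le_nhds (eventually_lt_nhds (abs_pos.2 (sub_ne_zero.2 hab)))]
        with θ hθ using fun _ => hθ.le
  have hθ : ∀ᶠ θ in nhdsWithin (0:ℝ) (Set.Ioi 0), 0 < θ ∧ θ < η ∧ θ < 1 ∧
      ∀ a ∈ V, ∀ b ∈ V, a ≠ b → θ ≤ |a - b| :=
    eventually_mem_nhdsWithin.and <|
      ((eventually_lt_nhds hη).filter_mono nhdsWithin_le_nhds).and <|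
      ((eventually_lt_nhds one_pos).filter_mono nhdsWithin_le_nhds).and <|
      (Filter.eventually_all_finset V).2 fun a ha =>
        (Filter.eventually_all_finset V).2 (hsep a ha)
  obtain ⟨θ, hθ0, hθη, hθ1, hθsep⟩ := hθ.exists
  have hψ : ∀ a : ℝ, ∃ q : ℚ, (1 - θ) * a < q ∧ (q : ℝ) < (1 - θ) * a + θ * θ := fun a =>
    exists_rat_btwn (by nlinarith)
  choose ψ hψlo hψhi using hψ
  refine ⟨ψ, fun a ha => ⟨⟨⟨?_, ?_⟩, abs_sub_lt_iff.2 ⟨?_, ?_⟩⟩, fun b hb hab => ?_⟩⟩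
  all_goals obtain ⟨ha0, ha1⟩ := hV a ha
  · nlinarith [hψlo a]
  · nlinarith [hψhi a]
  · nlinarith [hψhi a]
  · nlinarith [hψlo a]
  · have hθab := hθsep a ha b hb hab
    have h₁ : (1 - θ) * (a - b) ≤ (1 - θ) * |a - b| :=
      mul_le_mul_of_nonneg_left (le_abs_self _) (by linarith)
    have h₂ : (1 - θ) * (b - a) ≤ (1 - θ) * |a - b| :=
      mul_le_mul_of_nonneg_left (abs_sub_comm a b ▸ le_abs_self _) (by linarith)
    have h₃ : θ * θ ≤ θ * |a - b| := mul_le_mul_of_nonneg_left hθab hθ0.le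
    exact abs_sub_lt_iff.2 ⟨by linarith [hψhi a, hψlo b], by linarith [hψhi b, hψlo a]⟩

section SupDeriv

variable {X L : Type*} [DecidableEq X] (M : LMC X L)

noncomputable def supDeriv (x y : X) : ℝ :=
  sSup ((fun ε : ℚ => (ε : ℝ)) '' {ε | Deriv M x ε y})

variable {M}

theorem supDeriv_bddAbove (x y : X) :
    BddAbove ((fun ε : ℚ => (ε : ℝ)) '' {ε | Deriv M x ε y}) :=
  ⟨1, by rintro _ ⟨ε, hd, rfl⟩; show (ε : ℝ) ≤ 1; exact_mod_cast hd.le_one⟩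

theorem le_supDeriv {x y : X} {ε : ℚ} (hd : Deriv M x ε y) : (ε : ℝ) ≤ supDeriv M x y :=
  le_csSup (supDeriv_bddAbove x y) (Set.mem_image_of_mem _ hd)

theorem supDeriv_nonneg (x y : X) : 0 ≤ supDeriv M x y := by
  simpa using le_supDeriv (Deriv.zero (M := M) x y)

theorem exists_deriv_gt {x y : X} {c : ℝ} (hc : c < supDeriv M x y) :
    ∃ ε : ℚ, Deriv M x ε y ∧ c < ε := by
  obtain ⟨_, ⟨ε, hd, rfl⟩, hlt⟩ :=
    exists_lt_of_lt_csSup (Set.Nonempty.image _ ⟨0, Deriv.zero x y⟩) hc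
  exact ⟨ε, hd, hlt⟩

theorem deriv_of_lt_supDeriv {x y : X} {ε : ℚ} (h0 : 0 ≤ ε) (hε : (ε : ℝ) < supDeriv M x y) :
    Deriv M x ε y := by
  obtain ⟨ε', hd, hlt⟩ := exists_deriv_gt hε
  exact hd.weak h0 (by exact_mod_cast hlt.le)

theorem exists_deriv_gt_expv_sub {h : X → ℝ} (hh : ∀ z, h z ∈ Set.Icc (0:ℝ) 1)
    (hne : ∀ u v, |h u - h v| ≤ supDeriv M u v) (x y : X) {η : ℝ} (hη : 0 < η) :
    ∃ ε : ℚ, Deriv M x ε y ∧ expv (M.τ x) h - expv (M.τ y) h - η < ε := by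
  set S := (M.τ x).supp ∪ (M.τ y).supp
  obtain ⟨ψ, hψ⟩ := exists_rat_contracting_approx (S.image h)
    (forall_mem_image.2 fun z _ => hh z) (by positivity : 0 < η / 4)
  set g : X → ℚ := fun z => ψ (h z)
  have hg01 : ∀ z ∈ S, 0 ≤ g z ∧ g z ≤ 1 := fun z hz => by
    obtain ⟨⟨h0, h1⟩, -⟩ := (hψ _ (mem_image_of_mem h hz)).1
    exact ⟨by exact_mod_cast h0, by exact_mod_cast h1⟩
  have hgder : ∀ u ∈ S, ∀ v ∈ S, g v < g u → Deriv M u (g u - g v) v := by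
    intro u hu v hv hlt
    have hne_h : h u ≠ h v := fun heq => hlt.ne (by simp only [g, heq])
    have := (hψ _ (mem_image_of_mem h hu)).2 _ (mem_image_of_mem h hv) hne_h
    refine deriv_of_lt_supDeriv (sub_nonneg.2 hlt.le) ?_
    push_cast
    linarith [le_abs_self ((g u : ℝ) - g v), hne u v]
  have hgexp : expv (M.τ x) h - expv (M.τ y) h - η / 2 ≤
      expv (M.τ x) (fun z => (g z : ℝ)) - expv (M.τ y) (fun z => (g z : ℝ)) := by
    have happrox : ∀ z ∈ S, |(g z : ℝ) - h z| ≤ η / 4 := fun z hz =>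
      ((hψ _ (mem_image_of_mem h hz)).1.2).le
    have hx := abs_expv_sub_expv_le (M.τ x) fun z hz => happrox z (mem_union_left _ hz)
    have hy := abs_expv_sub_expv_le (M.τ y) fun z hz => happrox z (mem_union_right _ hz)
    linarith [(abs_le.1 hx).1, (abs_le.1 hy).2]
  rcases lt_or_ge (expv (M.τ x) h - expv (M.τ y) h) η with hsmall | hbig
  · exact ⟨0, Deriv.zero x y, by push_cast; linarith⟩
  · obtain ⟨ε, hε₁, hε₂⟩ := exists_rat_btwn (by linarith :
      expv (M.τ x) h - expv (M.τ y) h - η < expv (M.τ x) h - expv (M.τ y) h - η / 2)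
    have hε0 : 0 ≤ ε := by exact_mod_cast (show (0:ℝ) ≤ ε by linarith)
    exact ⟨ε, Deriv.exp g hε0 hg01 hgder (by linarith), hε₁⟩

theorem gammaFun_supDeriv_le : GammaFun M (supDeriv M) ≤ supDeriv M := by
  intro x y
  by_cases hl : M.label x = M.label y
  · refine gammaFun_le hl (supDeriv_nonneg x y) fun h hh hne =>
      le_of_forall_pos_lt_add fun η hη => ?_
    obtain ⟨ε, hd, hlt⟩ := exists_deriv_gt_expv_sub hh hne x y hη
    linarith [le_supDeriv hd]
  · rw [gammaFun_of_ne hl]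
    exact_mod_cast le_supDeriv (Deriv.lab x y hl)

end SupDeriv

theorem approximate_completeness_general {X L : Type*} [DecidableEq X]
    (M : LMC X L) (bd : PMet X)
    (hfix : ∀ x y, GammaFun M bd.d x y = bd.d x y)
    (hleast : ∀ d : PMet X, (∀ x y, GammaFun M d.d x y = d.d x y) →
      ∀ x y, bd.d x y ≤ d.d x y)
    (x y : X) (δ : ℝ) (hδ : 0 < δ) :
    ∃ ε : ℚ, 0 ≤ ε ∧ ε ≤ 1 ∧ Deriv M x ε y ∧
      0 ≤ bd.d x y - (ε : ℝ) ∧ bd.d x y - (ε : ℝ) < δ := by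
  obtain ⟨p, hp, hp_le⟩ := gammaFun_monotone.exists_isFixedPt_le
    (fun d x y => gammaFun_nonneg d x y) (gammaFun_supDeriv_le (M := M))
  have hbd : bd.d x y ≤ p x y := by
    have := hleast (gammaPMet M p) (fun u v => by simp only [gammaPMet, hp.eq]) x y
    exact this.trans_eq (congrFun (congrFun hp.eq x) y)
  obtain ⟨ε, hd, hlt⟩ := exists_deriv_gt (show bd.d x y - δ < supDeriv M x y by
    linarith [hp_le x y])
  have hsound := hd.le_of_prefixed bd fun u v => (hfix u v).le
  exact ⟨ε, hd.nonneg, hd.le_one, hd, by linarith, by linarith⟩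

/-- Approximate completeness: lower bounds can be derived with arbitrarily small
error w.r.t. the behavioural distance. -/
theorem approximate_completeness {X L : Type*} [DecidableEq X] [Nonempty L]
    (M : LMC X L) (bd : PMet X)
    (hfix : ∀ x y, GammaFun M bd.d x y = bd.d x y)
    (hleast : ∀ d : PMet X, (∀ x y, GammaFun M d.d x y = d.d x y) →
      ∀ x y, bd.d x y ≤ d.d x y)
    (x y : X) (δ : ℝ) (hδ : 0 < δ) :
    ∃ ε : ℚ, 0 ≤ ε ∧ ε ≤ 1 ∧ Deriv M x ε y ∧
      0 ≤ bd.d x y - (ε : ℝ) ∧ bd.d x y - (ε : ℝ) < δ :=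
  approximate_completeness_general M bd hfix hleast x y δ hδ
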